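/- arXiv:2509.07322 — 2 statements merged into one kernel-verified Lean document; each statement's English description precedes it below -/
import Mathlib

section
/- (Neyman orthogonality) Let S(β₀, η) = (W + Δh(H))·(V + Δπ(H))·X̃ where η = (h, π), Δh = h₀ − h, Δπ = π₀ − π, V = A − π₀(H), and E[W | H] = E[V | H] = 0 with W and V satisfying E[W·V | H] = 0. Then the Gateaux derivative of ρ ↦ E[S(β₀, η₀ + ρ·Δη)] at ρ = 0 equals E[(V·Δh(H) + W·Δπ(H))·X̃], which is the zero vector. -/
open MeasureTheory

/-! The score is a quadratic polynomial in `ρ` whose linear coefficient is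
`E[V • (Δh • X̃)] + E[W • (Δπ • X̃)]`. Since `Δh • X̃` and `Δπ • X̃` are `H`-measurable,
the tower property turns these into `E[E[V | H] • (Δh • X̃)]` and `E[E[W | H] • (Δπ • X̃)]`,
which vanish because the residuals are conditionally centred. -/

section

variable {Ω E : Type*} {mΩ : MeasurableSpace Ω} {μ : Measure Ω} [NormedAddCommGroup E]

theorem memLp_top_of_exists_bound {f : Ω → E} (hf : AEStronglyMeasurable f μ)
    (hbdd : ∃ C, ∀ ω, ‖f ω‖ ≤ C) : MemLp f ⊤ μ :=
  let ⟨C, hC⟩ := hbdd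
  memLp_top_of_bound hf C (.of_forall hC)

variable [NormedSpace ℝ E]

theorem hasDerivAt_integral_add_smul_add_sq_smul {a b c : Ω → E} (ha : Integrable a μ)
    (hb : Integrable b μ) (hc : Integrable c μ) (x : ℝ) :
    HasDerivAt (fun ρ : ℝ => ∫ ω, a ω + ρ • b ω + ρ ^ 2 • c ω ∂μ)
      ((∫ ω, b ω ∂μ) + (2 * x) • ∫ ω, c ω ∂μ) x := by
  have hpoly : (fun ρ : ℝ => ∫ ω, a ω + ρ • b ω + ρ ^ 2 • c ω ∂μ)
      = fun ρ => (∫ ω, a ω ∂μ) + ρ • (∫ ω, b ω ∂μ) + ρ ^ 2 • ∫ ω, c ω ∂μ := by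
    funext ρ
    rw [integral_add, integral_add, integral_smul, integral_smul]
    exacts [ha, hb.smul ρ, ha.add (hb.smul ρ), hc.smul _]
  rw [hpoly]
  exact ((((hasDerivAt_id x).smul_const (∫ ω, b ω ∂μ)).const_add (∫ ω, a ω ∂μ)).add
    ((hasDerivAt_pow 2 x).smul_const (∫ ω, c ω ∂μ))).congr_deriv (by simp)

variable [CompleteSpace E]

theorem integral_smul_eq_zero_of_condExp_eq_zero {m : MeasurableSpace Ω} (hm : m ≤ mΩ)
    [SigmaFinite (μ.trim hm)] {f : Ω → ℝ} {g : Ω → E} (hf : Integrable f μ)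
    (hf_cond : μ[f|m] =ᵐ[μ] 0) (hg : AEStronglyMeasurable[m] g μ) (hfg : Integrable (f • g) μ) :
    ∫ ω, f ω • g ω ∂μ = 0 := calc
  ∫ ω, f ω • g ω ∂μ = ∫ ω, (μ[f • g|m]) ω ∂μ := (integral_condExp hm).symm
  _ = ∫ ω, (μ[f|m] • g) ω ∂μ :=
    integral_congr_ae (condExp_smul_of_aestronglyMeasurable_right hf hfg hg)
  _ = 0 := by
    rw [integral_eq_zero_of_ae]
    filter_upwards [hf_cond] with ω hω
    simp [hω]

end

theorem stmt3_general {Ω : Type*} {mΩ : MeasurableSpace Ω} (μ : Measure Ω) [IsProbabilityMeasure μ]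
    (m : MeasurableSpace Ω) (hm : m ≤ mΩ) {d : ℕ}
    (W V Δh Δπ : Ω → ℝ) (X : Ω → EuclideanSpace ℝ (Fin d))
    (hWmean : μ[W|m] =ᵐ[μ] 0) (hVmean : μ[V|m] =ᵐ[μ] 0)
    (hΔhmeas : StronglyMeasurable[m] Δh) (hΔπmeas : StronglyMeasurable[m] Δπ)
    (hXmeas : StronglyMeasurable[m] X)
    (hΔhbdd : ∃ C, ∀ ω, |Δh ω| ≤ C) (hΔπbdd : ∃ C, ∀ ω, |Δπ ω| ≤ C)
    (hXbdd : ∃ C, ∀ ω, ‖X ω‖ ≤ C)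
    (hWint : Integrable W μ) (hVint : Integrable V μ)
    (hWVint : Integrable (fun ω => W ω * V ω) μ) :
    HasDerivAt
      (fun ρ : ℝ => ∫ ω, ((W ω + ρ * Δh ω) * (V ω + ρ * Δπ ω)) • X ω ∂μ)
      (∫ ω, (V ω * Δh ω + W ω * Δπ ω) • X ω ∂μ) 0
    ∧ ∫ ω, (V ω * Δh ω + W ω * Δπ ω) • X ω ∂μ = 0 := by
  have : IsFiniteMeasure (μ.trim hm) := isFiniteMeasure_trim hm
  simp_rw [← Real.norm_eq_abs] at hΔhbdd hΔπbdd
  have hΔh : MemLp Δh ⊤ μ :=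
    memLp_top_of_exists_bound (hΔhmeas.mono hm).aestronglyMeasurable hΔhbdd
  have hΔπ : MemLp Δπ ⊤ μ :=
    memLp_top_of_exists_bound (hΔπmeas.mono hm).aestronglyMeasurable hΔπbdd
  have hX : MemLp X ⊤ μ :=
    memLp_top_of_exists_bound (hXmeas.mono hm).aestronglyMeasurable hXbdd
  have hΔhX : MemLp (fun ω => Δh ω • X ω) ⊤ μ := hX.smul hΔh
  have hΔπX : MemLp (fun ω => Δπ ω • X ω) ⊤ μ := hX.smul hΔπ
  have hVΔhX : Integrable (fun ω => V ω • Δh ω • X ω) μ := hVint.smul_of_top_left hΔhX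
  have hWΔπX : Integrable (fun ω => W ω • Δπ ω • X ω) μ := hWint.smul_of_top_left hΔπX
  have hsplit : (fun ω => (V ω * Δh ω + W ω * Δπ ω) • X ω)
      = fun ω => V ω • Δh ω • X ω + W ω • Δπ ω • X ω := by
    funext ω; module
  have hquad : (fun ρ : ℝ => ∫ ω, ((W ω + ρ * Δh ω) * (V ω + ρ * Δπ ω)) • X ω ∂μ)
      = fun ρ : ℝ => ∫ ω, (W ω * V ω) • X ω + ρ • (V ω • Δh ω • X ω + W ω • Δπ ω • X ω)
          + ρ ^ 2 • Δh ω • Δπ ω • X ω ∂μ := by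
    funext ρ; congr 1; funext ω; module
  have hzero : ∫ ω, V ω • Δh ω • X ω + W ω • Δπ ω • X ω ∂μ = 0 := by
    rw [integral_add hVΔhX hWΔπX,
      integral_smul_eq_zero_of_condExp_eq_zero (g := fun ω => Δh ω • X ω) hm hVint hVmean
        (hΔhmeas.smul hXmeas).aestronglyMeasurable hVΔhX,
      integral_smul_eq_zero_of_condExp_eq_zero (g := fun ω => Δπ ω • X ω) hm hWint hWmean
        (hΔπmeas.smul hXmeas).aestronglyMeasurable hWΔπX, add_zero]
  rw [hsplit, hquad, hzero]
  refine ⟨?_, rfl⟩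
  simpa [hzero] using hasDerivAt_integral_add_smul_add_sq_smul (hWVint.smul_of_top_left hX)
    (hVΔhX.add hWΔπX) ((hΔπX.smul (r := ⊤) hΔh).integrable le_top) 0

/-- Neyman orthogonality: with `S(β₀, η₀ + ρ Δη) = (W + ρ Δh)(V + ρ Δπ) X̃`, the Gateaux
derivative of `ρ ↦ E[S(β₀, η₀ + ρ Δη)]` at `ρ = 0` equals `E[(V Δh + W Δπ) X̃]`, which is
the zero vector. -/
theorem stmt3 {Ω : Type*} {mΩ : MeasurableSpace Ω} (μ : Measure Ω) [IsProbabilityMeasure μ]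
    (m : MeasurableSpace Ω) (hm : m ≤ mΩ) {d : ℕ}
    (W V Δh Δπ : Ω → ℝ) (X : Ω → EuclideanSpace ℝ (Fin d))
    (hWmean : μ[W|m] =ᵐ[μ] 0) (hVmean : μ[V|m] =ᵐ[μ] 0)
    (hWVmean : μ[fun ω => W ω * V ω|m] =ᵐ[μ] 0)
    (hΔhmeas : StronglyMeasurable[m] Δh) (hΔπmeas : StronglyMeasurable[m] Δπ)
    (hXmeas : StronglyMeasurable[m] X)
    (hΔhbdd : ∃ C, ∀ ω, |Δh ω| ≤ C) (hΔπbdd : ∃ C, ∀ ω, |Δπ ω| ≤ C)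
    (hXbdd : ∃ C, ∀ ω, ‖X ω‖ ≤ C)
    (hWint : Integrable W μ) (hVint : Integrable V μ)
    (hWVint : Integrable (fun ω => W ω * V ω) μ) :
    HasDerivAt
      (fun ρ : ℝ => ∫ ω, ((W ω + ρ * Δh ω) * (V ω + ρ * Δπ ω)) • X ω ∂μ)
      (∫ ω, (V ω * Δh ω + W ω * Δπ ω) • X ω ∂μ) 0
    ∧ ∫ ω, (V ω * Δh ω + W ω * Δπ ω) • X ω ∂μ = 0 :=
  stmt3_general μ m hm W V Δh Δπ X hWmean hVmean hΔhmeas hΔπmeas hXmeas hΔhbdd hΔπbdd hXbdd hWint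
    hVint hWVint
end

section
/- With the notation of the previous decomposition and additionally E[W·V | H] = 0, for every fixed a ∈ ℝᵈ: |aᵀ·E[(W + Δh)·(V + Δπ)·X̃]| ≤ σ_max·‖a‖₂·(E[(Δπ(H)·Δh(H))²])^{1/2}, where σ²_max = λ_max(E[X̃X̃ᵀ]). -/
/-!
Expand `(W + Δh)(V + Δπ) aᵀX̃` into four terms. In the three terms `(aᵀX̃) W V`, `(Δπ aᵀX̃) W` and
`(Δh aᵀX̃) V` the factor multiplying the noise is bounded and `H`-measurable, so it can be pulled
out of the conditional expectation given `H`, and the term has mean zero. What is left is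
`E[Δπ Δh aᵀX̃]`, which Cauchy–Schwarz bounds by `‖Δπ Δh‖₂ ‖aᵀX̃‖₂`, and
`‖aᵀX̃‖₂² = aᵀ E[X̃X̃ᵀ] a ≤ σ²_max ‖a‖₂²`.
-/

open MeasureTheory Matrix
open scoped ENNReal

section

variable {Ω : Type*} {m m₀ : MeasurableSpace Ω} {μ : Measure Ω}

theorem memLp_top_of_forall_abs_le {f : Ω → ℝ} (hf : AEStronglyMeasurable f μ)
    (h : ∃ C, ∀ ω, |f ω| ≤ C) : MemLp f ∞ μ :=
  let ⟨C, hC⟩ := h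
  memLp_top_of_bound hf C (.of_forall hC)

theorem integral_mul_eq_zero_of_condExp_eq_zero (hm : m ≤ m₀) [SigmaFinite (μ.trim hm)]
    {ψ φ : Ω → ℝ} (hψ : StronglyMeasurable[m] ψ) (hψ_bdd : MemLp ψ ∞ μ)
    (hφ : Integrable φ μ) (hφ_condExp : μ[φ|m] =ᵐ[μ] 0) :
    ∫ ω, ψ ω * φ ω ∂μ = 0 :=
  calc ∫ ω, ψ ω * φ ω ∂μ = ∫ ω, (μ[ψ * φ|m]) ω ∂μ := (integral_condExp hm).symm
    _ = ∫ ω, (ψ * μ[φ|m]) ω ∂μ :=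
      integral_congr_ae <|
        condExp_mul_of_stronglyMeasurable_left hψ (hφ.mul_of_top_right hψ_bdd) hφ
    _ = ∫ _, (0 : ℝ) ∂μ := integral_congr_ae (hφ_condExp.mono fun ω hω => by simp [hω])
    _ = 0 := integral_zero Ω ℝ

theorem integral_add_mul_add_mul_eq_integral_mul_mul [IsFiniteMeasure μ] (hm : m ≤ m₀)
    {W V Δh Δπ g : Ω → ℝ} (hW : Integrable W μ) (hV : Integrable V μ)
    (hWV : Integrable (fun ω => W ω * V ω) μ) (hW_condExp : μ[W|m] =ᵐ[μ] 0)
    (hV_condExp : μ[V|m] =ᵐ[μ] 0) (hWV_condExp : μ[fun ω => W ω * V ω|m] =ᵐ[μ] 0)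
    (hΔh : StronglyMeasurable[m] Δh) (hΔh_bdd : MemLp Δh ∞ μ)
    (hΔπ : StronglyMeasurable[m] Δπ) (hΔπ_bdd : MemLp Δπ ∞ μ)
    (hg : StronglyMeasurable[m] g) (hg_bdd : MemLp g ∞ μ) :
    ∫ ω, (W ω + Δh ω) * (V ω + Δπ ω) * g ω ∂μ = ∫ ω, Δπ ω * Δh ω * g ω ∂μ := by
  have hgWV := integral_mul_eq_zero_of_condExp_eq_zero hm hg hg_bdd hWV hWV_condExp
  have hΔπgW : ∫ ω, Δπ ω * g ω * W ω ∂μ = 0 := integral_mul_eq_zero_of_condExp_eq_zero hm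
    (hΔπ.mul hg) (hg_bdd.mul hΔπ_bdd) hW hW_condExp
  have hΔhgV : ∫ ω, Δh ω * g ω * V ω ∂μ = 0 := integral_mul_eq_zero_of_condExp_eq_zero hm
    (hΔh.mul hg) (hg_bdd.mul hΔh_bdd) hV hV_condExp
  have I₁ : Integrable (fun ω => g ω * (W ω * V ω)) μ := hWV.mul_of_top_right hg_bdd
  have I₂ : Integrable (fun ω => Δπ ω * g ω * W ω) μ := hW.mul_of_top_right (hg_bdd.mul hΔπ_bdd)
  have I₃ : Integrable (fun ω => Δh ω * g ω * V ω) μ := hV.mul_of_top_right (hg_bdd.mul hΔh_bdd)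
  have I₄ : Integrable (fun ω => Δπ ω * Δh ω * g ω) μ :=
    (hg_bdd.mul (r := ∞) (hΔh_bdd.mul (r := ∞) hΔπ_bdd)).integrable le_top
  calc ∫ ω, (W ω + Δh ω) * (V ω + Δπ ω) * g ω ∂μ
      = ∫ ω, (g ω * (W ω * V ω) + (Δπ ω * g ω) * W ω + (Δh ω * g ω) * V ω)
          + Δπ ω * Δh ω * g ω ∂μ := integral_congr_ae (.of_forall fun ω => by ring)
    _ = ∫ ω, Δπ ω * Δh ω * g ω ∂μ := by
      rw [integral_add (by fun_prop) I₄, integral_add (by fun_prop) I₃, integral_add I₁ I₂,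
        hgWV, hΔπgW, hΔhgV]
      simp

theorem abs_integral_mul_le_sqrt_mul_sqrt {f g : Ω → ℝ} (hf : MemLp f 2 μ) (hg : MemLp g 2 μ) :
    |∫ ω, f ω * g ω ∂μ| ≤ √(∫ ω, f ω ^ 2 ∂μ) * √(∫ ω, g ω ^ 2 ∂μ) := by
  have hnorm_rpow : ∀ x : ℝ, ‖x‖ ^ (2 : ℝ) = x ^ 2 := fun x => by
    rw [Real.rpow_two, Real.norm_eq_abs, sq_abs]
  have holder := integral_mul_norm_le_Lp_mul_Lq Real.HolderConjugate.two_two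
    (by simpa using hf) (by simpa using hg)
  simp only [hnorm_rpow] at holder
  calc |∫ ω, f ω * g ω ∂μ| ≤ ∫ ω, ‖f ω‖ * ‖g ω‖ ∂μ := by
        rw [← Real.norm_eq_abs]
        simpa only [norm_mul] using norm_integral_le_integral_norm (fun ω => f ω * g ω)
    _ ≤ (∫ ω, f ω ^ 2 ∂μ) ^ (1 / 2 : ℝ) * (∫ ω, g ω ^ 2 ∂μ) ^ (1 / 2 : ℝ) := holder
    _ = √(∫ ω, f ω ^ 2 ∂μ) * √(∫ ω, g ω ^ 2 ∂μ) := by rw [Real.sqrt_eq_rpow, Real.sqrt_eq_rpow]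

theorem integral_sum_mul_sq_eq_dotProduct_mulVec {ι : Type*} [Fintype ι] {X : Ω → ι → ℝ}
    (hX : ∀ i, MemLp (fun ω => X ω i) 2 μ) (a : ι → ℝ) :
    ∫ ω, (∑ i, a i * X ω i) ^ 2 ∂μ = a ⬝ᵥ (Matrix.of fun i j => ∫ ω, X ω i * X ω j ∂μ) *ᵥ a := by
  have hXX : ∀ i j, Integrable (fun ω => X ω i * X ω j) μ := fun i j =>
    (hX i).integrable_mul (hX j)
  calc ∫ ω, (∑ i, a i * X ω i) ^ 2 ∂μ = ∫ ω, ∑ i, a i * ∑ j, (X ω i * X ω j) * a j ∂μ := by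
        congr with ω
        rw [sq, Finset.sum_mul_sum]
        simp only [Finset.mul_sum]
        exact Finset.sum_congr rfl fun i _ => Finset.sum_congr rfl fun j _ => by ring
    _ = ∑ i, a i * ∑ j, (∫ ω, X ω i * X ω j ∂μ) * a j := by
        rw [integral_finsetSum _ fun i _ => (integrable_finsetSum _ fun j _ =>
          (hXX i j).mul_const _).const_mul _]
        refine Finset.sum_congr rfl fun i _ => ?_
        rw [integral_const_mul, integral_finsetSum _ fun j _ => (hXX i j).mul_const _]
        simp only [integral_mul_const]
    _ = _ := rfl

theorem sqrt_integral_sum_mul_sq_le {ι : Type*} [Fintype ι] {X : Ω → ι → ℝ}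
    (hX : ∀ i, MemLp (fun ω => X ω i) 2 μ) {Sig : Matrix ι ι ℝ}
    (hSig : ∀ i j, Sig i j = ∫ ω, X ω i * X ω j ∂μ) {σ : ℝ} (hσ : 0 ≤ σ) {a : ι → ℝ}
    (hSig_le : a ⬝ᵥ Sig *ᵥ a ≤ σ ^ 2 * (a ⬝ᵥ a)) :
    √(∫ ω, (∑ i, a i * X ω i) ^ 2 ∂μ) ≤ σ * √(∑ i, a i ^ 2) := by
  have hSig_eq : Sig = Matrix.of fun i j => ∫ ω, X ω i * X ω j ∂μ := Matrix.ext hSig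
  calc √(∫ ω, (∑ i, a i * X ω i) ^ 2 ∂μ) = √(a ⬝ᵥ Sig *ᵥ a) := by
        rw [integral_sum_mul_sq_eq_dotProduct_mulVec hX, hSig_eq]
    _ ≤ √(σ ^ 2 * (a ⬝ᵥ a)) := Real.sqrt_le_sqrt hSig_le
    _ = σ * √(∑ i, a i ^ 2) := by
        rw [Real.sqrt_mul (sq_nonneg _), Real.sqrt_sq hσ]
        simp only [dotProduct, sq]

end

/-- Rate-double-robustness bound: with `E[W|H] = E[V|H] = 0`, `E[W V|H] = 0`, and
`σ²max = λ_max(E[X̃X̃ᵀ])`, for every fixed `a ∈ ℝᵈ`,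
`|aᵀ E[(W + Δh)(V + Δπ) X̃]| ≤ σmax ‖a‖₂ (E[(Δπ Δh)²])^{1/2}`. -/
theorem stmt11 {Ω : Type*} {mΩ : MeasurableSpace Ω} (μ : Measure Ω) [IsProbabilityMeasure μ]
    (m : MeasurableSpace Ω) (hm : m ≤ mΩ) {d : ℕ}
    (W V Δh Δπ : Ω → ℝ) (X : Ω → Fin d → ℝ) (σmax : ℝ) (hσ : 0 ≤ σmax)
    (hWmean : μ[W|m] =ᵐ[μ] 0) (hVmean : μ[V|m] =ᵐ[μ] 0)
    (hWVmean : μ[fun ω => W ω * V ω|m] =ᵐ[μ] 0)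
    (hΔhmeas : StronglyMeasurable[m] Δh) (hΔπmeas : StronglyMeasurable[m] Δπ)
    (hXmeas : ∀ i, StronglyMeasurable[m] (fun ω => X ω i))
    (hΔhbdd : ∃ C, ∀ ω, |Δh ω| ≤ C) (hΔπbdd : ∃ C, ∀ ω, |Δπ ω| ≤ C)
    (hXbdd : ∃ C, ∀ ω i, |X ω i| ≤ C)
    (hWint : Integrable W μ) (hVint : Integrable V μ)
    (hWVint : Integrable (fun ω => W ω * V ω) μ)
    (Sig : Matrix (Fin d) (Fin d) ℝ)
    (hSig : ∀ i j, Sig i j = ∫ ω, X ω i * X ω j ∂μ)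
    (hSigub : ∀ v : Fin d → ℝ, v ⬝ᵥ Sig.mulVec v ≤ σmax ^ 2 * (v ⬝ᵥ v))
    (a : Fin d → ℝ) :
    |∫ ω, ((W ω + Δh ω) * (V ω + Δπ ω)) * ∑ i, a i * X ω i ∂μ|
      ≤ σmax * Real.sqrt (∑ i, (a i) ^ 2)
          * Real.sqrt (∫ ω, (Δπ ω * Δh ω) ^ 2 ∂μ) := by
  have hX_bdd : ∀ i, MemLp (fun ω => X ω i) ∞ μ := fun i =>
    memLp_top_of_forall_abs_le ((hXmeas i).mono hm).aestronglyMeasurable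
      (hXbdd.imp fun _ hC ω => hC ω i)
  have hΔh_bdd : MemLp Δh ∞ μ :=
    memLp_top_of_forall_abs_le (hΔhmeas.mono hm).aestronglyMeasurable hΔhbdd
  have hΔπ_bdd : MemLp Δπ ∞ μ :=
    memLp_top_of_forall_abs_le (hΔπmeas.mono hm).aestronglyMeasurable hΔπbdd
  have hg : StronglyMeasurable[m] fun ω => ∑ i, a i * X ω i :=
    Finset.stronglyMeasurable_fun_sum _ fun i _ => (hXmeas i).const_mul (a i)
  have hg_bdd : MemLp (fun ω => ∑ i, a i * X ω i) ∞ μ :=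
    memLp_finsetSum _ fun i _ => (hX_bdd i).const_mul (a i)
  rw [integral_add_mul_add_mul_eq_integral_mul_mul hm hWint hVint hWVint hWmean hVmean hWVmean
    hΔhmeas hΔh_bdd hΔπmeas hΔπ_bdd hg hg_bdd]
  calc |∫ ω, Δπ ω * Δh ω * ∑ i, a i * X ω i ∂μ|
      ≤ √(∫ ω, (Δπ ω * Δh ω) ^ 2 ∂μ) * √(∫ ω, (∑ i, a i * X ω i) ^ 2 ∂μ) :=
        abs_integral_mul_le_sqrt_mul_sqrt ((hΔh_bdd.mul hΔπ_bdd).mono_exponent le_top)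
          (hg_bdd.mono_exponent le_top)
    _ ≤ √(∫ ω, (Δπ ω * Δh ω) ^ 2 ∂μ) * (σmax * √(∑ i, a i ^ 2)) := by
        gcongr
        exact sqrt_integral_sum_mul_sq_le (fun i => (hX_bdd i).mono_exponent le_top) hSig hσ
          (hSigub a)
    _ = σmax * √(∑ i, a i ^ 2) * √(∫ ω, (Δπ ω * Δh ω) ^ 2 ∂μ) := mul_comm _ _
end
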